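/- arXiv:1102.4640 — 6 statements merged into one kernel-verified Lean document; each statement's English description precedes it below -/
import Mathlib

section
/- Let a, b, c, d be integers such that √b and √d are not integers (i.e., b and d are not perfect squares). If (a + √b)/(c + √d) is an algebraic integer, then (a - √b)/(c - √d) is also an algebraic integer. -/
lemma sqQ (n : ℤ) (q : ℚ) (h : (q:ℂ)^2 = (n:ℂ)) : IsSquare n := by
  rw [← Rat.isSquare_intCast_iff]
  have h2 : q^2 = (n:ℚ) := by exact_mod_cast h
  exact ⟨q, by rw [← h2]; ring⟩

lemma lin2 (n : ℤ) (hn : ¬ IsSquare n) (e : ℂ) (he : e^2 = (n:ℂ)) :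
    ∀ α β : ℚ, (α:ℂ) + (β:ℂ) * e = 0 → α = 0 ∧ β = 0 := by
  intro α β h
  by_cases hβ : β = 0
  · subst hβ
    refine ⟨by exact_mod_cast (by simpa using h : (α:ℂ) = 0), rfl⟩
  · exfalso
    apply hn
    apply sqQ n (-α/β)
    have hβ' : (β:ℂ) ≠ 0 := by exact_mod_cast hβ
    have he' : ((-α/β : ℚ):ℂ) = e := by
      push_cast
      field_simp
      linear_combination -h
    rw [he']; exact he

lemma lin4 (b d : ℤ) (hb : ¬IsSquare b) (hd : ¬IsSquare d) (hbd : ¬IsSquare (b*d))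
    (sb sd : ℂ) (hsb : sb^2 = (b:ℂ)) (hsd : sd^2 = (d:ℂ)) :
    ∀ α β γ δ : ℚ, (α:ℂ) + β*sb + γ*sd + δ*(sb*sd) = 0 →
      α = 0 ∧ β = 0 ∧ γ = 0 ∧ δ = 0 := by
  intro α β γ δ h
  have e1 : ((α:ℂ)+β*sb)^2 = ((γ:ℂ)+δ*sb)^2 * (d:ℂ) := by
    have h' : (α:ℂ)+β*sb = -(((γ:ℂ)+δ*sb) * sd) := by linear_combination h
    calc ((α:ℂ)+β*sb)^2 = ((γ:ℂ)+δ*sb)^2 * sd^2 := by rw [h']; ring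
    _ = ((γ:ℂ)+δ*sb)^2 * (d:ℂ) := by rw [hsd]
  have e2 : ((α^2 + β^2*b - γ^2*(d:ℚ) - δ^2*((b:ℚ)*d) : ℚ):ℂ)
      + ((2*α*β - 2*γ*δ*(d:ℚ) : ℚ):ℂ) * sb = 0 := by
    push_cast
    linear_combination e1 + ((δ:ℂ)^2*(d:ℂ) - (β:ℂ)^2) * hsb
  obtain ⟨hA, hB⟩ := lin2 b hb sb hsb _ _ e2
  by_cases hγδ : (γ:ℂ) + (δ:ℂ)*sb = 0
  · obtain ⟨hγ, hδ⟩ := lin2 b hb sb hsb γ δ hγδ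
    subst hγ; subst hδ
    have h2 : (α:ℂ) + (β:ℂ)*sb = 0 := by push_cast at h ⊢; linear_combination h
    obtain ⟨hα, hβ⟩ := lin2 b hb sb hsb α β h2
    exact ⟨hα, hβ, rfl, rfl⟩
  · exfalso
    -- D ≠ 0
    have hD : γ^2 - δ^2*(b:ℚ) ≠ 0 := by
      intro hD0
      have : ((γ:ℂ) + δ*sb) * ((γ:ℂ) - δ*sb) = 0 := by
        have : ((γ^2 - δ^2*(b:ℚ) : ℚ):ℂ) = 0 := by rw [hD0]; simp
        push_cast at this
        linear_combination this - (δ:ℂ)^2 * hsb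
      rcases mul_eq_zero.mp this with h0 | h0
      · exact hγδ h0
      · obtain ⟨hγ, hδ⟩ := lin2 b hb sb hsb γ (-δ) (by push_cast; linear_combination h0)
        apply hγδ; rw [hγ]; rw [neg_eq_zero] at hδ; rw [hδ]; simp
    set D : ℚ := γ^2 - δ^2*(b:ℚ) with hDdef
    set u : ℚ := -(α*γ - β*δ*(b:ℚ))/D with hu
    set v : ℚ := -(β*γ - α*δ)/D with hv
    have hsd2 : sd = (u:ℂ) + (v:ℂ)*sb := by
      have h' : (α:ℂ)+β*sb = -(((γ:ℂ)+δ*sb) * sd) := by linear_combination h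
      have hD' : (D:ℂ) ≠ 0 := by exact_mod_cast hD
      have key : (D:ℂ) * sd = ((-(α*γ - β*δ*(b:ℚ)) : ℚ):ℂ) + ((-(β*γ - α*δ) : ℚ):ℂ) * sb := by
        push_cast [hDdef]
        linear_combination ((γ:ℂ) - (δ:ℂ)*sb) * h' + ((δ:ℂ)^2 * sd + (β:ℂ)*(δ:ℂ)) * hsb
      rw [hu, hv]
      push_cast
      field_simp
      push_cast at key
      linear_combination key
    have e3 : ((u^2 + v^2*(b:ℚ) - (d:ℚ) : ℚ):ℂ) + ((2*u*v : ℚ):ℂ) * sb = 0 := by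
      push_cast
      have : ((u:ℂ) + (v:ℂ)*sb)^2 = (d:ℂ) := by rw [← hsd2]; exact hsd
      linear_combination this - (v:ℂ)^2 * hsb
    obtain ⟨hE, hF⟩ := lin2 b hb sb hsb _ _ e3
    have huv : u = 0 ∨ v = 0 := by
      rcases mul_eq_zero.mp (by linarith : u * v = 0) with h0 | h0
      · left; exact h0
      · right; exact h0
    rcases huv with h0 | h0
    · -- u = 0 : sd = v*sb, bd = (v*b)^2
      apply hbd
      apply sqQ (b*d) (v*b)
      have : sd = (v:ℂ)*sb := by rw [hsd2, h0]; simp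
      push_cast
      calc ((v:ℂ)*(b:ℂ))^2 = (v:ℂ)^2 * (b:ℂ) * (b:ℂ) := by ring
      _ = (b:ℂ) * (d:ℂ) := by
          have hv2 : ((v^2*(b:ℚ) : ℚ):ℂ) = ((d:ℚ):ℂ) := by
            norm_cast
            rw [h0] at hE; nlinarith [hE]
          push_cast at hv2
          rw [hv2]; ring
    · -- v = 0 : sd rational
      apply hd
      apply sqQ d u
      have : sd = (u:ℂ) := by rw [hsd2, h0]; simp
      rw [← this]; exact hsd

lemma predPoly {z w : ℂ} (P : ℂ → ℂ → Prop)
    (hzw : P z w) (hintc : ∀ n : ℤ, P (n:ℂ) (n:ℂ))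
    (hadd : ∀ x1 y1 x2 y2, P x1 y1 → P x2 y2 → P (x1+x2) (y1+y2))
    (hmul : ∀ x1 y1 x2 y2, P x1 y1 → P x2 y2 → P (x1*x2) (y1*y2)) :
    ∀ p : Polynomial ℤ, P (Polynomial.aeval z p) (Polynomial.aeval w p) := by
  intro p
  induction p using Polynomial.induction_on with
  | C n => simpa using hintc n
  | add p q hp hq => simpa [map_add] using hadd _ _ _ _ hp hq
  | monomial n t ih =>
      have key : ∀ x : ℂ, Polynomial.aeval x (Polynomial.C t * Polynomial.X ^ (n+1))
          = Polynomial.aeval x (Polynomial.C t * Polynomial.X ^ n) * x := by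
        intro x; simp [pow_succ]; ring
      rw [key z, key w]; exact hmul _ _ _ _ ih hzw
theorem stmt_0 (a b c d : ℤ) (hb : ¬ IsSquare b) (hd : ¬ IsSquare d)
    (sb sd : ℂ) (hsb : sb ^ 2 = (b : ℂ)) (hsd : sd ^ 2 = (d : ℂ))
    (h1 : (c : ℂ) + sd ≠ 0) (h2 : (c : ℂ) - sd ≠ 0)
    (hint : IsIntegral ℤ (((a : ℂ) + sb) / ((c : ℂ) + sd))) :
    IsIntegral ℤ (((a : ℂ) - sb) / ((c : ℂ) - sd)) := by
  obtain ⟨p, pmonic, hp0⟩ := hint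
  set z : ℂ := ((a:ℂ)+sb)/((c:ℂ)+sd) with hzdef
  set w : ℂ := ((a:ℂ)-sb)/((c:ℂ)-sd) with hwdef
  have hp : Polynomial.aeval z p = 0 := by rw [Polynomial.aeval_def]; exact hp0
  suffices hws : Polynomial.aeval w p = 0 by
    exact ⟨p, pmonic, by rw [← Polynomial.aeval_def]; exact hws⟩
  -- the denominator c^2 - d
  have hMC : ((c:ℂ)+sd) * ((c:ℂ)-sd) = (c:ℂ)^2 - (d:ℂ) := by linear_combination -hsd
  have hM : ((c:ℂ)^2 - (d:ℂ)) ≠ 0 := by rw [← hMC]; exact mul_ne_zero h1 h2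
  set MQ : ℚ := (c:ℚ)^2 - (d:ℚ) with hMQdef
  have hMQC : ((MQ:ℚ):ℂ) = (c:ℂ)^2 - (d:ℂ) := by rw [hMQdef]; push_cast; ring
  have hMQ0 : MQ ≠ 0 := by
    intro h0; apply hM; rw [← hMQC, h0]; simp
  have hMQC0 : ((MQ:ℚ):ℂ) ≠ 0 := by rw [hMQC]; exact hM
  by_cases hbd : IsSquare (b*d)
  · -- bd is a square: sb*sd is rational, sd is a rational multiple of sb
    obtain ⟨k, hk⟩ := hbd
    have hb0 : (b:ℂ) ≠ 0 := by
      intro h0; exact hb (by rw [(by exact_mod_cast h0 : b = 0)]; exact ⟨0, by ring⟩)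
    have ht2 : (sb*sd)^2 = ((k:ℂ))^2 := by
      rw [mul_pow, hsb, hsd]
      have : b*d = k^2 := by rw [hk]; ring
      exact_mod_cast this
    have hT : ∃ T : ℚ, (T:ℂ) = sb*sd := by
      have : (sb*sd - (k:ℂ)) * (sb*sd + (k:ℂ)) = 0 := by linear_combination ht2
      rcases mul_eq_zero.mp this with h0 | h0
      · exact ⟨(k:ℚ), by push_cast; linear_combination -h0⟩
      · exact ⟨-(k:ℚ), by push_cast; linear_combination -h0⟩
    obtain ⟨T, hT⟩ := hT
    have hT2 : T^2 = (b:ℚ)*(d:ℚ) := by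
      have : ((T:ℂ))^2 = (b:ℂ)*(d:ℂ) := by
        rw [hT, mul_pow, hsb, hsd]
      exact_mod_cast this
    have hbQ : (b:ℚ) ≠ 0 := by exact_mod_cast hb0
    set r : ℚ := T / (b:ℚ) with hrdef
    have hr : (r:ℂ) * sb = sd := by
      have h6 : (T:ℂ) * sb = (b:ℂ) * sd := by
        rw [hT]; linear_combination sd * hsb
      rw [hrdef]; push_cast
      rw [div_mul_eq_mul_div, div_eq_iff hb0]
      linear_combination h6
    have hrb : r * (b:ℚ) = T := by rw [hrdef]; field_simp
    have hrbC : (r:ℂ) * (b:ℂ) = (T:ℂ) := by exact_mod_cast hrb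
    have hrT : r * T = (d:ℚ) := by
      rw [hrdef]; field_simp; linear_combination hT2
    have hrTC : (r:ℂ) * (T:ℂ) = (d:ℂ) := by exact_mod_cast hrT
    set P : ℂ → ℂ → Prop := fun x y => ∃ α β : ℚ, x = (α:ℂ) + (β:ℂ)*sb ∧ y = (α:ℂ) - (β:ℂ)*sb
      with hPdef
    have base : P z w := by
      refine ⟨(a*c - T)/MQ, ((c:ℚ) - a*r)/MQ, ?_, ?_⟩
      · rw [hzdef, div_eq_iff h1, ← hr]
        push_cast
        field_simp
        linear_combination ((a:ℂ)*(r:ℂ)^2 - (r:ℂ)*(c:ℂ))*hsb + ((a:ℂ)*(r:ℂ) - (c:ℂ))*hrbC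
          + ((a:ℂ) + sb)*hrTC + ((a:ℂ) + sb)*hMQC
      · rw [hwdef, div_eq_iff h2, ← hr]
        push_cast
        field_simp
        linear_combination ((a:ℂ)*(r:ℂ)^2 - (r:ℂ)*(c:ℂ))*hsb + ((a:ℂ)*(r:ℂ) - (c:ℂ))*hrbC
          + ((a:ℂ) - sb)*hrTC + ((a:ℂ) - sb)*hMQC
    have hintc : ∀ n : ℤ, P (n:ℂ) (n:ℂ) := by
      intro n; exact ⟨(n:ℚ), 0, by push_cast; ring, by push_cast; ring⟩
    have hadd : ∀ x1 y1 x2 y2, P x1 y1 → P x2 y2 → P (x1+x2) (y1+y2) := by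
      rintro x1 y1 x2 y2 ⟨α1, β1, rfl, rfl⟩ ⟨α2, β2, rfl, rfl⟩
      exact ⟨α1+α2, β1+β2, by push_cast; ring, by push_cast; ring⟩
    have hmul : ∀ x1 y1 x2 y2, P x1 y1 → P x2 y2 → P (x1*x2) (y1*y2) := by
      rintro x1 y1 x2 y2 ⟨α1, β1, rfl, rfl⟩ ⟨α2, β2, rfl, rfl⟩
      refine ⟨α1*α2 + β1*β2*(b:ℚ), α1*β2 + β1*α2, ?_, ?_⟩
      · push_cast; linear_combination (β1:ℂ)*(β2:ℂ) * hsb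
      · push_cast; linear_combination (β1:ℂ)*(β2:ℂ) * hsb
    obtain ⟨α, β, hzero, hwval⟩ := predPoly P base hintc hadd hmul p
    rw [hp] at hzero
    obtain ⟨hα, hβ⟩ := lin2 b hb sb hsb α β (by linear_combination -hzero)
    rw [hwval, hα, hβ]; simp
  · -- bd is not a square : 1, sb, sd, sb*sd are linearly independent over ℚ
    set P : ℂ → ℂ → Prop := fun x y => ∃ α β γ δ : ℚ,
        x = (α:ℂ) + (β:ℂ)*sb + (γ:ℂ)*sd + (δ:ℂ)*(sb*sd) ∧
        y = (α:ℂ) - (β:ℂ)*sb - (γ:ℂ)*sd + (δ:ℂ)*(sb*sd) with hPdef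
    have ht : (sb*sd)^2 = (b:ℂ)*(d:ℂ) := by rw [mul_pow, hsb, hsd]
    have base : P z w := by
      refine ⟨(a:ℚ)*(c:ℚ)/MQ, (c:ℚ)/MQ, -(a:ℚ)/MQ, -1/MQ, ?_, ?_⟩
      · rw [hzdef, div_eq_iff h1]
        push_cast
        field_simp
        linear_combination ((a:ℂ) + sb) * hsd + ((a:ℂ) + sb) * hMQC
      · rw [hwdef, div_eq_iff h2]
        push_cast
        field_simp
        linear_combination ((a:ℂ) - sb) * hsd + ((a:ℂ) - sb) * hMQC
    have hintc : ∀ n : ℤ, P (n:ℂ) (n:ℂ) := by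
      intro n; exact ⟨(n:ℚ), 0, 0, 0, by push_cast; ring, by push_cast; ring⟩
    have hadd : ∀ x1 y1 x2 y2, P x1 y1 → P x2 y2 → P (x1+x2) (y1+y2) := by
      rintro x1 y1 x2 y2 ⟨α1, β1, γ1, δ1, rfl, rfl⟩ ⟨α2, β2, γ2, δ2, rfl, rfl⟩
      exact ⟨α1+α2, β1+β2, γ1+γ2, δ1+δ2, by push_cast; ring, by push_cast; ring⟩
    have hmul : ∀ x1 y1 x2 y2, P x1 y1 → P x2 y2 → P (x1*x2) (y1*y2) := by
      rintro x1 y1 x2 y2 ⟨α1, β1, γ1, δ1, rfl, rfl⟩ ⟨α2, β2, γ2, δ2, rfl, rfl⟩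
      refine ⟨α1*α2 + β1*β2*(b:ℚ) + γ1*γ2*(d:ℚ) + δ1*δ2*((b:ℚ)*(d:ℚ)),
              α1*β2 + β1*α2 + γ1*δ2*(d:ℚ) + δ1*γ2*(d:ℚ),
              α1*γ2 + γ1*α2 + β1*δ2*(b:ℚ) + δ1*β2*(b:ℚ),
              α1*δ2 + δ1*α2 + β1*γ2 + γ1*β2, ?_, ?_⟩
      · push_cast
        linear_combination ((β1:ℂ)*β2 + ((β1:ℂ)*δ2 + (δ1:ℂ)*β2)*sd) * hsb
          + ((γ1:ℂ)*γ2 + ((γ1:ℂ)*δ2 + (δ1:ℂ)*γ2)*sb) * hsd + (δ1:ℂ)*(δ2:ℂ) * ht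
      · push_cast
        linear_combination ((β1:ℂ)*β2 - ((β1:ℂ)*δ2 + (δ1:ℂ)*β2)*sd) * hsb
          + ((γ1:ℂ)*γ2 - ((γ1:ℂ)*δ2 + (δ1:ℂ)*γ2)*sb) * hsd + (δ1:ℂ)*(δ2:ℂ) * ht
    obtain ⟨α, β, γ, δ, hzero, hwval⟩ := predPoly P base hintc hadd hmul p
    rw [hp] at hzero
    obtain ⟨hα, hβ, hγ, hδ⟩ := lin4 b d hb hd hbd sb sd hsb hsd α β γ δ
      (by linear_combination -hzero)
    rw [hwval, hα, hβ, hγ, hδ]; simp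
end

section
/- Let n be a positive integer and r, k nonnegative integers with r ≤ k. If both (r² + 4n + r√(r²+4n))/(k² + 4n + k√(k²+4n)) and (r² + 4n - r√(r²+4n))/(k² + 4n - k√(k²+4n)) are algebraic integers, then their product (r²+4n)/(k²+4n) is an algebraic integer, and hence r = k. -/
theorem stmt_1 (n r k : ℕ) (hn : 0 < n) (hrk : r ≤ k)
    (h1 : IsIntegral ℤ
      ((((r : ℝ) ^ 2 + 4 * n + r * Real.sqrt ((r : ℝ) ^ 2 + 4 * n)) /
        ((k : ℝ) ^ 2 + 4 * n + k * Real.sqrt ((k : ℝ) ^ 2 + 4 * n)))))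
    (h2 : IsIntegral ℤ
      ((((r : ℝ) ^ 2 + 4 * n - r * Real.sqrt ((r : ℝ) ^ 2 + 4 * n)) /
        ((k : ℝ) ^ 2 + 4 * n - k * Real.sqrt ((k : ℝ) ^ 2 + 4 * n))))) :
    IsIntegral ℤ ((((r : ℝ) ^ 2 + 4 * n) / ((k : ℝ) ^ 2 + 4 * n))) ∧ r = k := by
  set a : ℝ := (r : ℝ) ^ 2 + 4 * n with ha
  set b : ℝ := (k : ℝ) ^ 2 + 4 * n with hb
  have hnpos : (0:ℝ) < 4 * n := by positivity
  have hapos : 0 < a := by positivity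
  have hbpos : 0 < b := by positivity
  have hsa : Real.sqrt a ^ 2 = a := Real.sq_sqrt hapos.le
  have hsb : Real.sqrt b ^ 2 = b := Real.sq_sqrt hbpos.le
  have hkb : (k : ℝ) * Real.sqrt b < b := by
    have h1 : ((k:ℝ) * Real.sqrt b) ^ 2 < b ^ 2 := by
      rw [mul_pow, hsb]
      nlinarith [hsb]
    have h2 : (0:ℝ) ≤ (k:ℝ) * Real.sqrt b := by positivity
    nlinarith
  have hd1 : b + (k:ℝ) * Real.sqrt b ≠ 0 := by positivity
  have hd2 : b - (k:ℝ) * Real.sqrt b ≠ 0 := by linarith [hkb]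
  have hprod : (a + r * Real.sqrt a) / (b + k * Real.sqrt b) *
      ((a - r * Real.sqrt a) / (b - k * Real.sqrt b)) = a / b := by
    rw [div_mul_div_comm]
    have hnum : (a + r * Real.sqrt a) * (a - r * Real.sqrt a) = a * (4 * n) := by
      have : (a + r * Real.sqrt a) * (a - r * Real.sqrt a)
          = a ^ 2 - (r:ℝ)^2 * (Real.sqrt a)^2 := by ring
      rw [this, hsa]; rw [ha]; ring
    have hden : (b + k * Real.sqrt b) * (b - k * Real.sqrt b) = b * (4 * n) := by
      have : (b + k * Real.sqrt b) * (b - k * Real.sqrt b)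
          = b ^ 2 - (k:ℝ)^2 * (Real.sqrt b)^2 := by ring
      rw [this, hsb]; rw [hb]; ring
    rw [hnum, hden, mul_div_mul_right _ _ hnpos.ne']
  have hint : IsIntegral ℤ (a / b) := by
    rw [← hprod]; exact h1.mul h2
  refine ⟨hint, ?_⟩
  -- a/b is rational
  set q : ℚ := ((r:ℚ)^2 + 4*n) / ((k:ℚ)^2 + 4*n) with hq
  have hcast : (q : ℝ) = a / b := by
    rw [hq]; push_cast; rfl
  have hqint : IsIntegral ℤ q := by
    have : IsIntegral ℤ ((q : ℝ)) := hcast ▸ hint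
    exact (isIntegral_algebraMap_iff (algebraMap ℚ ℝ).injective).mp this
  obtain ⟨m, hm⟩ := IsIntegrallyClosed.isIntegral_iff.mp hqint
  have hqbpos : (0:ℚ) < (k:ℚ)^2 + 4*n := by positivity
  have hq1 : q ≤ 1 := by
    rw [hq, div_le_one hqbpos]
    have : (r:ℚ) ≤ k := by exact_mod_cast hrk
    nlinarith
  have hq0 : 0 < q := by
    rw [hq]; positivity
  have hm' : (m : ℚ) = q := by rw [← hm]; simp [algebraMap]
  have hm1 : m = 1 := by
    have h1 : (0:ℚ) < m := hm' ▸ hq0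
    have h2 : (m:ℚ) ≤ 1 := hm' ▸ hq1
    have : (0:ℤ) < m := by exact_mod_cast h1
    have : m ≤ 1 := by exact_mod_cast h2
    omega
  have : q = 1 := by rw [← hm', hm1]; norm_num
  rw [hq, div_eq_one_iff_eq hqbpos.ne'] at this
  have : (r:ℚ)^2 = (k:ℚ)^2 := by linarith
  have : r^2 = k^2 := by exact_mod_cast this
  nlinarith [this]
end

section
/- Let n and k be positive integers with n ≤ k + 1. If √(k²+4n) is an integer, then k = n - 1, and in that case n + ((k + √(k²+4n))/2)² = n(n+1). -/
theorem stmt_5 (n k : ℕ) (hn : 0 < n) (hk : 0 < k) (hnk : n ≤ k + 1)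
    (h : ∃ m : ℤ, Real.sqrt ((k : ℝ) ^ 2 + 4 * n) = (m : ℝ)) :
    (k : ℤ) = (n : ℤ) - 1 ∧
      (n : ℝ) + (((k : ℝ) + Real.sqrt ((k : ℝ) ^ 2 + 4 * n)) / 2) ^ 2 =
        (n : ℝ) * ((n : ℝ) + 1) := by
  obtain ⟨m, hm⟩ := h
  have hpos : (0:ℝ) ≤ (k : ℝ) ^ 2 + 4 * n := by positivity
  have hm0 : (0:ℝ) ≤ (m:ℝ) := hm ▸ Real.sqrt_nonneg _
  have hm0' : (0:ℤ) ≤ m := by exact_mod_cast hm0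
  have hsq : (m:ℝ)^2 = (k : ℝ) ^ 2 + 4 * n := by
    rw [← hm, Real.sq_sqrt hpos]
  have hsqZ : m^2 = (k:ℤ)^2 + 4 * n := by exact_mod_cast hsq
  have hnkZ : (n:ℤ) ≤ (k:ℤ) + 1 := by exact_mod_cast hnk
  have hnZ : (0:ℤ) < n := by exact_mod_cast hn
  have hlt : (k:ℤ) < m := by nlinarith
  have hle : m ≤ (k:ℤ) + 2 := by nlinarith
  have hm2 : m = (k:ℤ) + 2 := by
    rcases (by omega : m = (k:ℤ) + 1 ∨ m = (k:ℤ) + 2) with h1 | h2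
    · exfalso; rw [h1] at hsqZ; 
      have h4 : 2*(k:ℤ)+1 = 4*n := by nlinarith
      omega
    · exact h2
  have hkn : (k:ℤ) = (n:ℤ) - 1 := by rw [hm2] at hsqZ; nlinarith
  refine ⟨hkn, ?_⟩
  rw [hm, hm2]
  have : ((k:ℤ):ℝ) = (n:ℝ) - 1 := by exact_mod_cast hkn
  push_cast at this ⊢
  rw [this]; ring
end

section
/- Let n, k be positive integers with n ≤ k+1, and suppose (k + √(k²+4n))/2 is rational. Then k = n - 1 and (k + √(k²+4n))/2 = n. -/
theorem stmt_7 (n k : ℕ) (hn : 0 < n) (hk : 0 < k) (hnk : n ≤ k + 1)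
    (h : ∃ q : ℚ, ((k : ℝ) + Real.sqrt ((k : ℝ) ^ 2 + 4 * n)) / 2 = (q : ℝ)) :
    (k : ℤ) = (n : ℤ) - 1 ∧
      ((k : ℝ) + Real.sqrt ((k : ℝ) ^ 2 + 4 * n)) / 2 = (n : ℝ) := by
  obtain ⟨q, hq⟩ := h
  have hcast : ((k : ℝ) ^ 2 + 4 * n) = ((k ^ 2 + 4 * n : ℕ) : ℝ) := by push_cast; ring
  have hrat : ¬ Irrational (Real.sqrt ((k ^ 2 + 4 * n : ℕ) : ℝ)) := by
    rw [← hcast]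
    have : Real.sqrt ((k : ℝ) ^ 2 + 4 * n) = ((2 * q - k : ℚ) : ℝ) := by
      push_cast
      linarith [hq]
    rw [this]
    exact Rat.not_irrational _
  rw [irrational_sqrt_natCast_iff, not_not] at hrat
  obtain ⟨m, hm⟩ := hrat
  -- m * m = k^2 + 4n, k < m ≤ k + 2
  have hmm : m * m = k ^ 2 + 4 * n := hm.symm
  have h1 : k * k < m * m := by nlinarith
  have h2 : m * m ≤ (k + 2) * (k + 2) := by nlinarith
  have hk_lt : k < m := by
    by_contra hc
    push_neg at hc
    exact absurd (Nat.mul_le_mul hc hc) (by nlinarith)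
  have hm_le : m ≤ k + 2 := by
    by_contra hc
    push_neg at hc
    have : (k + 3) * (k + 3) ≤ m * m := Nat.mul_le_mul hc hc
    nlinarith
  have hnk1 : n = k + 1 := by
    have hcase : m = k + 1 ∨ m = k + 2 := by omega
    rcases hcase with rfl | rfl
    · exfalso
      have h4 : 4 * n = 2 * k + 1 := by nlinarith
      omega
    · nlinarith
  subst hnk1
  have hs : Real.sqrt ((k : ℝ) ^ 2 + 4 * (k + 1 : ℕ)) = (k : ℝ) + 2 := by
    rw [show ((k : ℝ) ^ 2 + 4 * ((k + 1 : ℕ) : ℝ)) = ((k : ℝ) + 2) ^ 2 by push_cast; ring]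
    exact Real.sqrt_sq (by positivity)
  constructor
  · push_cast; ring
  · rw [hs]; push_cast; ring
end

section
/- Let (A, q) be a pair where A is a finite abelian group and q: A → ℂ× is a function constant on the non-trivial elements with common value ω, satisfying q(a^j) = q(a)^{j²} for all a and j, and |Σ_{a∈A} q(a)|² = |A|. If |A| ≥ 3, then A ≅ Z/2Z ⊕ Z/2Z with ω = -1, or A ≅ Z/3Z with ω a primitive cube root of unity, provided additionally that all non-trivial elements of A have the same order (so A is elementary abelian). -/
/-!
Since `q 1 = 1` and `q` equals `ω` off the identity, the Gauss sum is `1 + (n - 1) ω` with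
`n = |A|`, and `ω` is a root of unity, as `ω ^ (k ^ 2) = q (a ^ k) = q 1` for `k` the order of any
`a ≠ 1`. Expanding `|1 + (n - 1) ω|² = n` with `|ω| = 1` gives `2 Re ω = 2 - n`, so `n ≤ 4`.
Whenever `a ^ 2 ≠ 1` we get `ω = q (a ^ 2) = q a ^ 4 = ω ^ 4`, i.e. `ω ^ 3 = 1`. For `n = 3` this
makes `ω` a primitive cube root of unity; for `n = 4` we have `ω = -1`, so every element squares
to `1` and `A` is a Klein four-group.
-/

namespace Complex

theorem two_mul_re_eq_of_sq_norm_one_add_mul {z : ℂ} {m : ℝ} (hz : ‖z‖ = 1) (hm : m ≠ 0)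
    (h : ‖1 + m * z‖ ^ 2 = 1 + m) : 2 * z.re = 1 - m := by
  have hz' := Complex.sq_norm z
  rw [hz, normSq_apply] at hz'
  rw [Complex.sq_norm, normSq_apply] at h
  simp only [add_re, one_re, re_ofReal_mul, add_im, one_im, im_ofReal_mul, zero_add] at h
  refine mul_left_cancel₀ hm ?_
  linear_combination h + m ^ 2 * hz'

theorem eq_neg_one_of_norm_eq_one_of_re_eq_neg_one {z : ℂ} (hz : ‖z‖ = 1) (hre : z.re = -1) :
    z = -1 :=
  Complex.ext (by simpa using hre)
    (by simpa using abs_re_eq_norm.mp (by rw [hre, hz]; norm_num))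

end Complex

theorem IsKleinFour.of_card_eq_four_of_sq_eq_one {G : Type*} [Group G] (hcard : Nat.card G = 4)
    (hsq : ∀ g : G, g ^ 2 = 1) : IsKleinFour G := by
  have : Finite G := Nat.finite_of_card_ne_zero (by omega)
  have : Nontrivial G := Finite.one_lt_card_iff_nontrivial.mp (by omega)
  exact ⟨hcard, (Monoid.exponent_eq_prime_iff Nat.prime_two).mpr fun g hg =>
    orderOf_eq_prime (hsq g) hg⟩

section ConstantQuadraticMap

variable {G : Type*} [Group G] {q : G → ℂ} {ω : ℂ}

theorem map_one_of_map_pow_eq_pow_sq (hquad : ∀ (a : G) (j : ℕ), q (a ^ j) = q a ^ (j ^ 2)) :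
    q 1 = 1 := by
  simpa using hquad 1 0

theorem sum_eq_one_add_card_sub_one_mul [Fintype G] (hq1 : q 1 = 1)
    (hconst : ∀ a : G, a ≠ 1 → q a = ω) :
    ∑ a, q a = 1 + ((Fintype.card G : ℂ) - 1) * ω := by
  classical
  rw [← Finset.add_sum_erase _ _ (Finset.mem_univ 1), hq1,
    Finset.sum_congr rfl fun a ha => hconst a (Finset.ne_of_mem_erase ha), Finset.sum_const,
    Finset.card_erase_of_mem (Finset.mem_univ 1), Finset.card_univ, nsmul_eq_mul,
    Nat.cast_sub Fintype.card_pos, Nat.cast_one]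

theorem norm_eq_one_of_map_pow_eq_pow_sq [Finite G] (hconst : ∀ a : G, a ≠ 1 → q a = ω)
    (hquad : ∀ (a : G) (j : ℕ), q (a ^ j) = q a ^ (j ^ 2)) {a : G} (ha : a ≠ 1) : ‖ω‖ = 1 := by
  refine Complex.norm_eq_one_of_pow_eq_one (n := orderOf a ^ 2) ?_
    (pow_ne_zero 2 (orderOf_pos a).ne')
  rw [← hconst a ha, ← hquad, pow_orderOf_eq_one, map_one_of_map_pow_eq_pow_sq hquad]

theorem pow_four_eq_of_sq_ne_one (hconst : ∀ a : G, a ≠ 1 → q a = ω)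
    (hquad : ∀ (a : G) (j : ℕ), q (a ^ j) = q a ^ (j ^ 2)) {a : G} (ha : a ^ 2 ≠ 1) :
    ω ^ 4 = ω := by
  have ha1 : a ≠ 1 := by rintro rfl; simp at ha
  simpa [hconst a ha1, hconst _ ha] using (hquad a 2).symm

theorem two_mul_re_eq_two_sub_card [Fintype G] (hconst : ∀ a : G, a ≠ 1 → q a = ω)
    (hquad : ∀ (a : G) (j : ℕ), q (a ^ j) = q a ^ (j ^ 2))
    (hgauss : ‖∑ a, q a‖ ^ 2 = (Fintype.card G : ℝ)) {a : G} (ha : a ≠ 1) :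
    2 * ω.re = 2 - Fintype.card G := by
  have : Nontrivial G := nontrivial_of_ne a 1 ha
  have hcard : (2 : ℝ) ≤ Fintype.card G := by exact_mod_cast Fintype.one_lt_card
  rw [sum_eq_one_add_card_sub_one_mul (map_one_of_map_pow_eq_pow_sq hquad) hconst] at hgauss
  have := Complex.two_mul_re_eq_of_sq_norm_one_add_mul (m := Fintype.card G - 1)
    (norm_eq_one_of_map_pow_eq_pow_sq hconst hquad ha) (by linarith) (by push_cast; linarith)
  linarith

end ConstantQuadraticMap

theorem stmt_11_general (A : Type*) [CommGroup A] [Fintype A] (q : A → ℂ) (ω : ℂ)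
    (hconst : ∀ a : A, a ≠ 1 → q a = ω)
    (hquad : ∀ (a : A) (j : ℕ), q (a ^ j) = (q a) ^ (j ^ 2))
    (hgauss : ‖∑ a : A, q a‖ ^ 2 = (Fintype.card A : ℝ))
    (hcard : 3 ≤ Fintype.card A) :
    (Nonempty (A ≃* Multiplicative (ZMod 2 × ZMod 2)) ∧ ω = -1) ∨
      (Nonempty (A ≃* Multiplicative (ZMod 3)) ∧ ω ≠ 1 ∧ ω ^ 3 = 1) := by
  have : Nontrivial A := Fintype.one_lt_card_iff_nontrivial.mp (by omega)
  obtain ⟨a, ha⟩ := exists_ne (1 : A)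
  have hnorm : ‖ω‖ = 1 := norm_eq_one_of_map_pow_eq_pow_sq hconst hquad ha
  have hre := two_mul_re_eq_two_sub_card hconst hquad hgauss ha
  have hle : Fintype.card A ≤ 4 := by
    have := neg_le_of_abs_le ((Complex.abs_re_le_norm ω).trans hnorm.le)
    exact_mod_cast (by linarith : (Fintype.card A : ℝ) ≤ 4)
  obtain hn | hn : Fintype.card A = 3 ∨ Fintype.card A = 4 := by omega
  · have : Fact (Nat.Prime 3) := ⟨Nat.prime_three⟩
    have ha2 : a ^ 2 ≠ 1 := fun h => ha <| by
      have h3 : a ^ 3 = 1 := hn ▸ pow_card_eq_one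
      rwa [pow_succ, h, one_mul] at h3
    refine .inr ⟨⟨mulEquivOfPrimeCardEq (Nat.card_eq_fintype_card.trans hn) (by simp)⟩, ?_, ?_⟩
    · rintro rfl
      norm_num [hn] at hre
    · refine mul_left_cancel₀ (norm_ne_zero_iff.mp (hnorm ▸ one_ne_zero)) ?_
      rw [← pow_succ', pow_four_eq_of_sq_ne_one hconst hquad ha2, mul_one]
  · have hω : ω = -1 := Complex.eq_neg_one_of_norm_eq_one_of_re_eq_neg_one hnorm (by
      rw [hn] at hre; push_cast at hre; linarith)
    have hsq (b : A) : b ^ 2 = 1 := by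
      by_contra hb
      have := pow_four_eq_of_sq_ne_one hconst hquad hb
      norm_num [hω] at this
    have := IsKleinFour.of_card_eq_four_of_sq_eq_one (Nat.card_eq_fintype_card.trans hn) hsq
    exact .inl ⟨IsKleinFour.nonempty_mulEquiv, hω⟩

theorem stmt_11 (A : Type*) [CommGroup A] [Fintype A] (q : A → ℂ) (ω : ℂ)
    (hconst : ∀ a : A, a ≠ 1 → q a = ω)
    (hquad : ∀ (a : A) (j : ℕ), q (a ^ j) = (q a) ^ (j ^ 2))
    (hgauss : ‖∑ a : A, q a‖ ^ 2 = (Fintype.card A : ℝ))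
    (horder : ∀ a b : A, a ≠ 1 → b ≠ 1 → orderOf a = orderOf b)
    (hcard : 3 ≤ Fintype.card A) :
    (Nonempty (A ≃* Multiplicative (ZMod 2 × ZMod 2)) ∧ ω = -1) ∨
      (Nonempty (A ≃* Multiplicative (ZMod 3)) ∧ ω ≠ 1 ∧ ω ^ 3 = 1) :=
  stmt_11_general A q ω hconst hquad hgauss hcard
end

section
/- Suppose a fusion ring has basis {1, g₁, ..., g_{n-1}, X} where the gᵢ together with 1 form a group G of order n under multiplication, each g·X = X, X* = X, and dim Hom(1, X·X) = 1. Then X·X = Σ_{g∈G} g + kX for some nonnegative integer k; in particular every g ∈ G appears in X·X with multiplicity exactly 1. -/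
/-- `N a b c` is the multiplicity of the basis element `c` in the product `a * b`
of a fusion ring with basis `B`, unit `one` and duality `star`. -/
theorem stmt_18 (B : Type*) [Fintype B] [DecidableEq B]
    (one : B) (star : B → B) (N : B → B → B → ℕ)
    -- fusion ring axioms
    (hunitl : ∀ a b : B, N one a b = if a = b then 1 else 0)
    (hunitr : ∀ a b : B, N a one b = if a = b then 1 else 0)
    (hdual : ∀ a b c : B, N a b c = N (star b) (star a) (star c))
    (hfrob : ∀ a b c : B, N a b c = N (star a) c b)
    (hassoc : ∀ a b c d : B,
      (∑ e : B, N a b e * N e c d) = ∑ e : B, N b c e * N a e d)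
    -- the near-group basis: invertibles `Gset` forming a group, plus `X`
    (Gset : Finset B) (X : B)
    (hone : one ∈ Gset) (hX : X ∉ Gset)
    (hbasis : (Finset.univ : Finset B) = insert X Gset)
    (hstarG : ∀ g ∈ Gset, star g ∈ Gset)
    (hmulG : ∀ g ∈ Gset, ∀ h ∈ Gset, ∀ y : B, N g h y ≠ 0 → y ∈ Gset)
    (hinv : ∀ g ∈ Gset, N g (star g) one = 1)
    -- `g · X = X` for every `g ∈ G`
    (hgX : ∀ g ∈ Gset, ∀ y : B, N g X y = if y = X then 1 else 0)
    -- `X* = X`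
    (hXstar : star X = X)
    -- `dim Hom(1, X ⊗ X) = 1`
    (hXXone : N X X one = 1) :
    ∃ k : ℕ, N X X X = k ∧ ∀ g ∈ Gset, N X X g = 1 := by
  refine ⟨N X X X, rfl, fun g hg => ?_⟩
  rw [hfrob, hXstar, hdual, hXstar, hgX (star g) (hstarG g hg)]
  simp
end
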